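/- arXiv:2104.06315 — 3 statements merged into one kernel-verified Lean document; each statement's English description precedes it below -/
import Mathlib

section
/- Let H be Rayleigh distributed with density 2γe^{−γ²} on [0,∞), A uniform on {0,2}, and X arcsine distributed on (−1,1) with density 1/(π√(1−x²)), all independent. Then S = H·A·X has density f_S(s) = e^{−s²/4}/(4√π) on ℝ. -/
/-!
`H X` has the law of `H sin Θ` with `Θ` uniform: polar coordinates with a Rayleigh radius give a
standard planar Gaussian, so `H X` is centred Gaussian of variance `1/2`. Concretely, the density
of `H X` is `∫ f_H(γ) f_X(s/γ) dγ/γ`, which the substitution `γ = √(s² + t²)` turns into a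
Gaussian integral in `t`. Multiplying by the independent `A ∈ {0, 2}` then leaves an atom of mass
`1/2` at `0`, which is singular and invisible to the density, plus half the law of `2 H X`, a
centred Gaussian of variance `2`.
-/

open Real Set MeasureTheory ProbabilityTheory
open scoped ENNReal

lemma ENNReal.ofReal_indicator {α : Type*} (s : Set α) (g : α → ℝ) (x : α) :
    ENNReal.ofReal (s.indicator g x) = s.indicator (fun x => ENNReal.ofReal (g x)) x :=
  congr_fun (indicator_comp_of_zero ENNReal.ofReal_zero).symm x

lemma map_eq_withDensity_of_pdf_ae_eq {Ω E : Type*} [MeasurableSpace Ω] [MeasurableSpace E]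
    {P : Measure Ω} [IsProbabilityMeasure P] {μ : Measure E} [SigmaFinite μ] {V : Ω → E}
    {f : E → ℝ≥0∞} (hV : AEMeasurable V P) (hpdf : pdf V P μ =ᵐ[μ] f)
    (hf : ∫⁻ x, f x ∂μ = 1) :
    P.map V = μ.withDensity f := by
  have : IsProbabilityMeasure (P.map V) := Measure.isProbabilityMeasure_map hV
  have hdec := Measure.haveLebesgueDecomposition_add (P.map V) μ
  rw [withDensity_congr_ae (show ∂(P.map V)/∂μ =ᵐ[μ] f from hpdf)] at hdec
  -- the absolutely continuous part already carries all the mass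
  have hsing : (P.map V).singularPart μ univ = 0 := by
    have hmass := congrArg (· univ) hdec
    simp only [measure_univ, Measure.add_apply, withDensity_apply _ MeasurableSet.univ,
      Measure.restrict_univ, hf] at hmass
    exact (ENNReal.add_left_inj ENNReal.one_ne_top).mp (by rw [zero_add, ← hmass])
  rwa [Measure.measure_univ_eq_zero.mp hsing, zero_add] at hdec

lemma setLIntegral_preimage_const_mul {c : ℝ} (hc : c ≠ 0) {g : ℝ → ℝ≥0∞} (hg : Measurable g)
    {E : Set ℝ} (hE : MeasurableSet E) :
    ∫⁻ x in (c * ·) ⁻¹' E, g x = ∫⁻ y in E, ENNReal.ofReal |c⁻¹| * g (y / c) := by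
  calc ∫⁻ x in (c * ·) ⁻¹' E, g x = ∫⁻ x in (c * ·) ⁻¹' E, g (c * x / c) := by
        simp only [mul_div_cancel_left₀ _ hc]
    _ = ∫⁻ y in E, g (y / c) ∂(volume.map (c * ·)) :=
        (setLIntegral_map hE (hg.comp (measurable_id.div_const c)) (measurable_const_mul c)).symm
    _ = ∫⁻ y in E, ENNReal.ofReal |c⁻¹| * g (y / c) := by
        rw [Real.map_volume_mul_left hc, Measure.restrict_smul, lintegral_smul_measure,
          smul_eq_mul, ← lintegral_const_mul _ (by fun_prop)]

lemma withDensity_mconv_withDensity {f g : ℝ → ℝ≥0∞} (hf : Measurable f) (hg : Measurable g) :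
    volume.withDensity f ∗ₘ volume.withDensity g =
      volume.withDensity fun s => ∫⁻ γ, f γ * g (s / γ) * ENNReal.ofReal |γ⁻¹| := by
  ext E hE
  have hmulE : MeasurableSet ((fun p : ℝ × ℝ => p.1 * p.2) ⁻¹' E) := measurable_mul hE
  have hslice : ∀ᵐ γ : ℝ, f γ * volume.withDensity g ((γ * ·) ⁻¹' E)
      = ∫⁻ y in E, f γ * g (y / γ) * ENNReal.ofReal |γ⁻¹| := by
    filter_upwards [Measure.ae_ne volume 0] with γ hγ
    rw [withDensity_apply _ (measurable_const_mul γ hE), setLIntegral_preimage_const_mul hγ hg hE,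
      ← lintegral_const_mul _ (by fun_prop)]
    simp only [mul_comm, mul_assoc]
  rw [Measure.mconv, Measure.map_apply measurable_mul hE, Measure.prod_apply hmulE,
    lintegral_withDensity_eq_lintegral_mul _ hf (measurable_measure_prodMk_left hmulE),
    withDensity_apply _ hE]
  exact (lintegral_congr_ae hslice).trans (lintegral_lintegral_swap (by fun_prop))

lemma MeasureTheory.Measure.mconv_dirac_zero {M : Type*} [MonoidWithZero M] [MeasurableSpace M]
    [MeasurableMul₂ M] (μ : Measure M) [SFinite μ] :
    μ ∗ₘ Measure.dirac 0 = μ univ • Measure.dirac 0 := by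
  simp only [Measure.mconv_dirac, mul_zero, Measure.map_const]

lemma ProbabilityTheory.gaussianReal_mconv_dirac (m : ℝ) (v : NNReal) (c : ℝ) :
    gaussianReal m v ∗ₘ Measure.dirac c =
      gaussianReal (c * m) (.mk (c ^ 2) (sq_nonneg c) * v) := by
  simp only [Measure.mconv_dirac, mul_comm _ c, gaussianReal_map_const_mul]

noncomputable def rayleighPDF (γ : ℝ) : ℝ≥0∞ :=
  ENNReal.ofReal ((Ici (0 : ℝ)).indicator (fun γ => 2 * γ * Real.exp (-γ ^ 2)) γ)

noncomputable def arcsinePDF (x : ℝ) : ℝ≥0∞ :=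
  ENNReal.ofReal ((Ioo (-1 : ℝ) 1).indicator (fun x => 1 / (π * Real.sqrt (1 - x ^ 2))) x)

lemma measurable_rayleighPDF : Measurable rayleighPDF :=
  ENNReal.measurable_ofReal.comp ((by fun_prop : Measurable _).indicator measurableSet_Ici)

lemma measurable_arcsinePDF : Measurable arcsinePDF :=
  ENNReal.measurable_ofReal.comp ((by fun_prop : Measurable _).indicator measurableSet_Ioo)

lemma lintegral_rayleighPDF : ∫⁻ γ, rayleighPDF γ = 1 := by
  have hderiv : ∀ γ ∈ Ici (0 : ℝ),
      HasDerivAt (fun γ => -Real.exp (-γ ^ 2)) (2 * γ * Real.exp (-γ ^ 2)) γ := fun γ _ =>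
    ((hasDerivAt_pow 2 γ).neg.exp).neg.congr_deriv (by simp only [Pi.neg_apply]; push_cast; ring)
  have hnonneg : ∀ γ ∈ Ioi (0 : ℝ), 0 ≤ 2 * γ * Real.exp (-γ ^ 2) := fun γ hγ => by
    have : (0 : ℝ) < γ := hγ
    positivity
  have hlim : Filter.Tendsto (fun γ : ℝ => -Real.exp (-γ ^ 2)) Filter.atTop (nhds 0) := by
    simpa using (tendsto_exp_neg_atTop_nhds_zero.comp
      (Filter.tendsto_pow_atTop two_ne_zero)).neg
  simp only [rayleighPDF, ENNReal.ofReal_indicator]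
  rw [lintegral_indicator measurableSet_Ici, ← setLIntegral_congr Ioi_ae_eq_Ici,
    ← ofReal_integral_eq_lintegral_ofReal (integrableOn_Ioi_deriv_of_nonneg' hderiv hnonneg hlim)
      ((ae_restrict_iff' measurableSet_Ioi).mpr (Filter.Eventually.of_forall hnonneg)),
    integral_Ioi_of_hasDerivAt_of_nonneg' hderiv hnonneg hlim]
  norm_num

lemma lintegral_arcsinePDF : ∫⁻ x, arcsinePDF x = 1 := by
  have hcos : ∀ θ ∈ Ioo (-(π / 2)) (π / 2),
      ENNReal.ofReal |Real.cos θ| * ENNReal.ofReal (1 / (π * Real.sqrt (1 - Real.sin θ ^ 2)))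
        = ENNReal.ofReal π⁻¹ := fun θ hθ => by
    have hc : 0 < Real.cos θ := Real.cos_pos_of_mem_Ioo hθ
    rw [← Real.cos_sq', Real.sqrt_sq hc.le, abs_of_pos hc, ← ENNReal.ofReal_mul hc.le]
    congr 1
    field_simp
  simp only [arcsinePDF, ENNReal.ofReal_indicator]
  have himage : Real.sin '' Ioo (-(π / 2)) (π / 2) = Ioo (-1) 1 :=
    Real.sinPartialHomeomorph.image_source_eq_target
  rw [lintegral_indicator measurableSet_Ioo, ← himage,
    lintegral_image_eq_lintegral_abs_deriv_mul measurableSet_Ioo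
      (fun θ _ => (Real.hasDerivAt_sin θ).hasDerivWithinAt) Real.sinPartialHomeomorph.injOn,
    setLIntegral_congr_fun measurableSet_Ioo hcos, setLIntegral_const, Real.volume_Ioo,
    ← ENNReal.ofReal_mul (by positivity), sub_neg_eq_add, add_halves,
    inv_mul_cancel₀ Real.pi_ne_zero, ENNReal.ofReal_one]

lemma image_sqrt_sq_add_sq_Ioi (s : ℝ) : (fun t => √(s ^ 2 + t ^ 2)) '' Ioi 0 = Ioi |s| := by
  ext γ
  constructor
  · rintro ⟨t, ht, rfl⟩
    have : 0 < t := ht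
    simpa [Real.sqrt_sq_eq_abs] using
      Real.sqrt_lt_sqrt (sq_nonneg s) (lt_add_of_pos_right (s ^ 2) (by positivity : 0 < t ^ 2))
  · intro (hγ : |s| < γ)
    have hs : s ^ 2 < γ ^ 2 := sq_lt_sq' (neg_lt_of_abs_lt hγ) (lt_of_abs_lt hγ)
    refine ⟨√(γ ^ 2 - s ^ 2), Real.sqrt_pos.mpr (by linarith), ?_⟩
    show √(s ^ 2 + √(γ ^ 2 - s ^ 2) ^ 2) = γ
    rw [Real.sq_sqrt (by linarith), add_sub_cancel, Real.sqrt_sq ((abs_nonneg s).trans hγ.le)]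

lemma lintegral_Ioi_abs_mul_exp_neg_sq_div_sqrt (s : ℝ) :
    ∫⁻ γ in Ioi |s|, ENNReal.ofReal (2 * γ * Real.exp (-γ ^ 2) / (π * √(γ ^ 2 - s ^ 2)))
      = ENNReal.ofReal (Real.exp (-s ^ 2) / √π) := by
  have hderiv : ∀ t ∈ Ioi (0 : ℝ), HasDerivWithinAt (fun t => √(s ^ 2 + t ^ 2))
      (t / √(s ^ 2 + t ^ 2)) (Ioi 0) t := fun t ht => by
    have hpos : 0 < s ^ 2 + t ^ 2 := by have : (0 : ℝ) < t := ht; positivity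
    refine (((hasDerivAt_pow 2 t).const_add (s ^ 2)).sqrt hpos.ne').hasDerivWithinAt.congr_deriv ?_
    field_simp
    push_cast
    ring
  have hinj : InjOn (fun t => √(s ^ 2 + t ^ 2)) (Ioi 0) := fun a ha b hb hab => by
    have := congrArg (· ^ 2) hab
    simp only [Real.sq_sqrt (by positivity : 0 ≤ s ^ 2 + a ^ 2),
      Real.sq_sqrt (by positivity : 0 ≤ s ^ 2 + b ^ 2), add_right_inj] at this
    exact (pow_left_inj₀ (le_of_lt ha) (le_of_lt hb) two_ne_zero).mp this
  -- after substituting `γ = √(s² + t²)` the integrand becomes a Gaussian in `t`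
  have hsubst : ∀ t ∈ Ioi (0 : ℝ), ENNReal.ofReal |t / √(s ^ 2 + t ^ 2)| *
      ENNReal.ofReal (2 * √(s ^ 2 + t ^ 2) * Real.exp (-√(s ^ 2 + t ^ 2) ^ 2)
        / (π * √(√(s ^ 2 + t ^ 2) ^ 2 - s ^ 2)))
      = ENNReal.ofReal (2 / π * Real.exp (-s ^ 2) * Real.exp (-1 * t ^ 2)) := fun t ht => by
    have ht : (0 : ℝ) < t := ht
    have hpos : 0 < √(s ^ 2 + t ^ 2) := Real.sqrt_pos.mpr (by positivity)
    rw [Real.sq_sqrt (by positivity), add_sub_cancel_left, Real.sqrt_sq ht.le,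
      abs_of_pos (by positivity), ← ENNReal.ofReal_mul (by positivity), neg_add, Real.exp_add]
    congr 1
    field_simp
  rw [← image_sqrt_sq_add_sq_Ioi, lintegral_image_eq_lintegral_abs_deriv_mul measurableSet_Ioi
    hderiv hinj, setLIntegral_congr_fun measurableSet_Ioi hsubst,
    ← ofReal_integral_eq_lintegral_ofReal
      ((integrable_exp_neg_mul_sq one_pos).const_mul _).integrableOn
      (Filter.Eventually.of_forall fun t => by positivity),
    integral_const_mul, integral_gaussian_Ioi, div_one]
  congr 1
  have := Real.sqrt_pos.mpr Real.pi_pos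
  field_simp
  rw [Real.sq_sqrt Real.pi_pos.le]

lemma rayleighPDF_mul_arcsinePDF_div_mul (s γ : ℝ) :
    rayleighPDF γ * arcsinePDF (s / γ) * ENNReal.ofReal |γ⁻¹| = (Ioi |s|).indicator
      (fun γ => ENNReal.ofReal (2 * γ * Real.exp (-γ ^ 2) / (π * √(γ ^ 2 - s ^ 2)))) γ := by
  by_cases hγ : |s| < γ
  · have hγ0 : 0 < γ := (abs_nonneg s).trans_lt hγ
    have hs : s ^ 2 < γ ^ 2 := sq_lt_sq' (neg_lt_of_abs_lt hγ) (lt_of_abs_lt hγ)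
    have hmem : s / γ ∈ Ioo (-1 : ℝ) 1 := by
      rw [mem_Ioo, lt_div_iff₀ hγ0, div_lt_iff₀ hγ0]
      constructor <;> linarith [neg_abs_le s, le_abs_self s]
    have hsqrt : √(1 - (s / γ) ^ 2) = √(γ ^ 2 - s ^ 2) / γ := by
      rw [show 1 - (s / γ) ^ 2 = (γ ^ 2 - s ^ 2) / γ ^ 2 by field_simp,
        Real.sqrt_div' _ (sq_nonneg γ), Real.sqrt_sq hγ0.le]
    have : 0 < √(γ ^ 2 - s ^ 2) := Real.sqrt_pos.mpr (by linarith)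
    rw [indicator_of_mem (show γ ∈ Ioi |s| from hγ), rayleighPDF, arcsinePDF,
      indicator_of_mem (show γ ∈ Ici 0 from hγ0.le), indicator_of_mem hmem, hsqrt,
      abs_of_pos (inv_pos.mpr hγ0), ← ENNReal.ofReal_mul (by positivity),
      ← ENNReal.ofReal_mul (by positivity)]
    congr 1
    field_simp
  · rw [indicator_of_notMem (show γ ∉ Ioi |s| from hγ)]
    rcases le_or_gt γ 0 with hγ0 | hγ0
    · have : rayleighPDF γ = 0 := by
        rw [rayleighPDF, ENNReal.ofReal_eq_zero, indicator_apply]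
        split_ifs
        · exact mul_nonpos_of_nonpos_of_nonneg (by linarith) (exp_pos _).le
        · exact le_rfl
      rw [this, zero_mul, zero_mul]
    · have hmem : s / γ ∉ Ioo (-1 : ℝ) 1 := by
        rw [mem_Ioo, lt_div_iff₀ hγ0, div_lt_iff₀ hγ0]
        rintro ⟨h1, h2⟩
        exact hγ (abs_lt.mpr ⟨by linarith, by linarith⟩)
      rw [arcsinePDF, indicator_of_notMem hmem, ENNReal.ofReal_zero, mul_zero, zero_mul]

lemma lintegral_rayleighPDF_mul_arcsinePDF_div_mul (s : ℝ) :
    ∫⁻ γ, rayleighPDF γ * arcsinePDF (s / γ) * ENNReal.ofReal |γ⁻¹| = gaussianPDF 0 2⁻¹ s := by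
  simp_rw [rayleighPDF_mul_arcsinePDF_div_mul]
  rw [lintegral_indicator measurableSet_Ioi, lintegral_Ioi_abs_mul_exp_neg_sq_div_sqrt,
    gaussianPDF, gaussianPDFReal, sub_zero]
  congr 1
  push_cast
  field_simp

lemma rayleigh_mconv_arcsine_eq_gaussianReal :
    volume.withDensity rayleighPDF ∗ₘ volume.withDensity arcsinePDF = gaussianReal 0 2⁻¹ := by
  rw [withDensity_mconv_withDensity measurable_rayleighPDF measurable_arcsinePDF,
    gaussianReal_of_var_ne_zero _ (by norm_num)]
  simp_rw [lintegral_rayleighPDF_mul_arcsinePDF_div_mul]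

lemma inv_two_smul_gaussianReal_zero_two : (2 : ℝ≥0∞)⁻¹ • gaussianReal 0 2 =
    volume.withDensity fun s => ENNReal.ofReal (Real.exp (-s ^ 2 / 4) / (4 * √π)) := by
  rw [gaussianReal_of_var_ne_zero _ two_ne_zero, ← withDensity_smul _ (measurable_gaussianPDF _ _)]
  congr 1
  funext s
  rw [Pi.smul_apply, smul_eq_mul, gaussianPDF, gaussianPDFReal, sub_zero,
    ← ENNReal.ofReal_ofNat 2, ← ENNReal.ofReal_inv_of_pos two_pos,
    ← ENNReal.ofReal_mul (by norm_num)]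
  congr 1
  push_cast
  rw [show (2 : ℝ) * π * 2 = 2 ^ 2 * π by ring, Real.sqrt_mul (by norm_num),
    Real.sqrt_sq two_pos.le]
  field_simp
  norm_num [mul_comm]

/-- If `H` is Rayleigh (density `2γe^{−γ²}` on `[0,∞)`), `A` is uniform on `{0,2}`,
`X` is arcsine on `(−1,1)`, and `H, A, X` are independent, then `S = H·A·X` has
density `e^{−s²/4}/(4√π)` on `ℝ`. -/
theorem density_of_HAX {Ω : Type*} [MeasureSpace Ω] [IsProbabilityMeasure (ℙ : Measure Ω)]
    (H A X : Ω → ℝ) (hHm : Measurable H) (hAm : Measurable A) (hXm : Measurable X)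
    (hindep : iIndepFun ![H, A, X] ℙ)
    (hH : pdf H ℙ volume =ᵐ[volume] fun γ =>
      ENNReal.ofReal ((Ici (0 : ℝ)).indicator (fun γ => 2 * γ * Real.exp (-γ ^ 2)) γ))
    (hA : Measure.map A ℙ = (2 : ℝ≥0∞)⁻¹ • (Measure.dirac 0 + Measure.dirac 2))
    (hX : pdf X ℙ volume =ᵐ[volume] fun x =>
      ENNReal.ofReal ((Ioo (-1 : ℝ) 1).indicator (fun x => 1 / (π * Real.sqrt (1 - x ^ 2))) x)) :
    pdf (fun ω => H ω * A ω * X ω) ℙ volume =ᵐ[volume] fun s =>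
      ENNReal.ofReal (Real.exp (-s ^ 2 / 4) / (4 * Real.sqrt π)) := by
  have hlawH : Measure.map H ℙ = volume.withDensity rayleighPDF :=
    map_eq_withDensity_of_pdf_ae_eq hHm.aemeasurable hH lintegral_rayleighPDF
  have hlawX : Measure.map X ℙ = volume.withDensity arcsinePDF :=
    map_eq_withDensity_of_pdf_ae_eq hXm.aemeasurable hX lintegral_arcsinePDF
  have hHX : IndepFun H X ℙ := hindep.indepFun (i := 0) (j := 2) (by decide)
  have hHX_A : IndepFun (H * X) A ℙ :=
    hindep.indepFun_mul_left (fun i => by fin_cases i <;> assumption) 0 2 1 (by decide) (by decide)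
  have hlawHX : Measure.map (H * X) ℙ = gaussianReal 0 2⁻¹ := by
    rw [hHX.map_mul_eq_map_mconv_map hHm hXm, hlawH, hlawX, rayleigh_mconv_arcsine_eq_gaussianReal]
  have hlawS : Measure.map (fun ω => H ω * A ω * X ω) ℙ =
      (2 : ℝ≥0∞)⁻¹ • Measure.dirac 0 + (2 : ℝ≥0∞)⁻¹ • gaussianReal 0 2 := by
    rw [show (fun ω => H ω * A ω * X ω) = H * X * A from funext fun ω => mul_right_comm _ _ _,
      hHX_A.map_mul_eq_map_mconv_map (hHm.mul hXm) hAm, hlawHX, hA, Measure.mconv_smul_right,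
      Measure.mconv_add, Measure.mconv_dirac_zero, gaussianReal_mconv_dirac, measure_univ,
      one_smul, smul_add, mul_zero]
    congr
    ext
    norm_num
  rw [inv_two_smul_gaussianReal_zero_two] at hlawS
  exact (Measure.eq_rnDeriv (by fun_prop) ((mutuallySingular_dirac 0 volume).smul _) hlawS).symm
end

section
/- If H is Rayleigh with density 2γe^{−γ²} and, conditional on H, Y has density 1/(π√(y(2H² − y))) on (0, 2H²), then the unconditional density of Y is f_Y(y) = e^{−y/2}/√(2πy) for y > 0, i.e., Y is Gamma(1/2, scale 2) (chi-squared with 1 degree of freedom), with E[Y] = 1. -/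
open Real Set MeasureTheory
open scoped ENNReal

lemma cov1d {s : Set ℝ} {f f' : ℝ → ℝ} (hs : MeasurableSet s)
    (hf' : ∀ x ∈ s, HasDerivWithinAt f (f' x) s x) (hf : InjOn f s) (g : ℝ → ℝ≥0∞) :
    ∫⁻ x in f '' s, g x = ∫⁻ x in s, ENNReal.ofReal |f' x| * g (f x) := by
  simpa only [ContinuousLinearMap.det_toSpanSingleton] using
    lintegral_image_eq_lintegral_abs_det_fderiv_mul volume hs
      (fun x hx => (hf' x hx).hasFDerivWithinAt) hf g


lemma gammaHalfLint :
    ∫⁻ t in Ioi (0:ℝ), ENNReal.ofReal (t ^ (-(1/2) : ℝ) * Real.exp (-(1/2) * t))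
      = ENNReal.ofReal (Real.sqrt 2 * Real.sqrt π) := by
  have hint : IntegrableOn (fun t : ℝ => t ^ (-(1/2) : ℝ) * Real.exp (-(1/2) * t)) (Ioi 0) := by
    have := integrableOn_rpow_mul_exp_neg_mul_rpow (p := 1) (s := -(1/2)) (b := 1/2)
      (by norm_num) (by norm_num) (by norm_num)
    simpa using this
  rw [← ofReal_integral_eq_lintegral_ofReal hint]
  · congr 1
    have : ∫ t in Ioi (0:ℝ), t ^ (-(1/2) : ℝ) * Real.exp (-(1/2) * t)
        = ∫ t in Ioi (0:ℝ), t ^ (-(1/2) : ℝ) * Real.exp (-(1/2) * t ^ (1:ℝ)) := by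
      refine setIntegral_congr_fun measurableSet_Ioi (fun t ht => ?_); rw [Real.rpow_one]
    rw [this, integral_rpow_mul_exp_neg_mul_rpow (by norm_num) (by norm_num) (by norm_num)]
    have h1 : (-(-(1/2) + 1) / 1 : ℝ) = -(1/2) := by norm_num
    have h2 : ((-(1/2) + 1) / 1 : ℝ) = 1/2 := by norm_num
    rw [h1, h2, Real.Gamma_one_half_eq]
    have : ((1:ℝ)/2) ^ (-(1/2) : ℝ) = Real.sqrt 2 := by
      rw [Real.rpow_neg (by norm_num), ← Real.sqrt_eq_rpow, one_div, Real.sqrt_inv, inv_inv]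
    rw [this]; ring
  · filter_upwards [ae_restrict_mem measurableSet_Ioi] with t ht
    have : (0:ℝ) < t := ht
    positivity


lemma key_pos {y : ℝ} (hy : 0 < y) :
    ∫⁻ h, ENNReal.ofReal ((Ici (0:ℝ)).indicator (fun γ => 2*γ*Real.exp (-γ^2)) h) *
      ENNReal.ofReal ((Ioo (0:ℝ) (2*h^2)).indicator
        (fun z => 1/(π*Real.sqrt (z*(2*h^2 - z)))) y)
    = ENNReal.ofReal (Real.exp (-y/2) / Real.sqrt (2*π*y)) := by
  set c := Real.sqrt (y/2) with hc_def
  have hc : 0 < c := Real.sqrt_pos.2 (by linarith)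
  -- Step A : rewrite integrand as indicator over Ioi c
  have hA : ∀ h : ℝ,
      ENNReal.ofReal ((Ici (0:ℝ)).indicator (fun γ => 2*γ*Real.exp (-γ^2)) h) *
        ENNReal.ofReal ((Ioo (0:ℝ) (2*h^2)).indicator
          (fun z => 1/(π*Real.sqrt (z*(2*h^2 - z)))) y)
      = (Ioi c).indicator
          (fun h => ENNReal.ofReal (2*h*Real.exp (-h^2) * (1/(π*Real.sqrt (y*(2*h^2 - y)))))) h := by
    intro h
    by_cases hh : h ∈ Ioi c
    · have hh0 : 0 < h := lt_trans hc hh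
      have hy2 : y/2 < h^2 := (Real.sqrt_lt' hh0).1 hh
      rw [indicator_of_mem hh, indicator_of_mem (mem_Ici.2 hh0.le),
        indicator_of_mem (mem_Ioo.2 ⟨hy, by linarith⟩),
        ← ENNReal.ofReal_mul (by positivity)]
    · rw [indicator_of_notMem hh]
      rcases lt_or_ge h 0 with h0 | h0
      · rw [indicator_of_notMem (fun hmem => absurd (mem_Ici.1 hmem) (not_le.2 h0))]
        simp
      · have hhc : h ≤ c := not_lt.1 (fun hlt => hh hlt)
        have hsq : h^2 ≤ y/2 := by
          nlinarith [Real.sq_sqrt (show (0:ℝ) ≤ y/2 by linarith)]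
        have hz : (Ioo (0:ℝ) (2*h^2)).indicator
            (fun z => 1/(π*Real.sqrt (z*(2*h^2 - z)))) y = 0 :=
          indicator_of_notMem
            (fun hmem => (not_lt.2 (by linarith : 2*h^2 ≤ y)) hmem.2) _
        rw [hz]
        simp
  simp_rw [hA]
  rw [lintegral_indicator measurableSet_Ioi]
  -- Step B : change of variables t = 2h² - y
  have hderiv : ∀ x ∈ Ioi c, HasDerivWithinAt (fun h : ℝ => 2*h^2 - y) (4*x) (Ioi c) x := by
    intro x _
    have h1 : HasDerivAt (fun h : ℝ => 2*h^2 - y) (4*x) x := by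
      have := ((hasDerivAt_pow 2 x).const_mul 2).sub_const y
      convert this using 1
      · rfl
      · rfl
      · rw [show (2:ℕ)-1 = 1 from rfl]; push_cast; ring
    exact h1.hasDerivWithinAt
  have hinj : InjOn (fun h : ℝ => 2*h^2 - y) (Ioi c) := by
    intro a ha b hb hab
    have ha0 : (0:ℝ) ≤ a := (lt_trans hc ha).le
    have hb0 : (0:ℝ) ≤ b := (lt_trans hc hb).le
    have h2 : a^2 = b^2 := by dsimp at hab; linarith
    have := congrArg Real.sqrt h2
    rwa [Real.sqrt_sq ha0, Real.sqrt_sq hb0] at this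
  have himg : (fun h : ℝ => 2*h^2 - y) '' Ioi c = Ioi 0 := by
    ext t
    constructor
    · rintro ⟨h, hh, rfl⟩
      have hh0 : 0 < h := lt_trans hc hh
      have : y/2 < h^2 := (Real.sqrt_lt' hh0).1 hh
      simp only [mem_Ioi]; linarith
    · intro ht
      have ht' : (0:ℝ) < t := ht
      refine ⟨Real.sqrt ((t+y)/2), ?_, ?_⟩
      · exact Real.sqrt_lt_sqrt (by linarith) (by linarith)
      · have := Real.sq_sqrt (show (0:ℝ) ≤ (t+y)/2 by linarith)
        dsimp; rw [this]; ring
  have hcov := cov1d measurableSet_Ioi hderiv hinj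
    (fun t => ENNReal.ofReal (Real.exp (-(t+y)/2) / (2*π*Real.sqrt (y*t))))
  rw [himg] at hcov
  have hB : ∫⁻ h in Ioi c,
      ENNReal.ofReal (2*h*Real.exp (-h^2) * (1/(π*Real.sqrt (y*(2*h^2 - y)))))
      = ∫⁻ t in Ioi (0:ℝ), ENNReal.ofReal (Real.exp (-(t+y)/2) / (2*π*Real.sqrt (y*t))) := by
    rw [hcov]
    refine setLIntegral_congr_fun measurableSet_Ioi (fun h hh => ?_)
    have hh0 : 0 < h := lt_trans hc hh
    have hy2 : y/2 < h^2 := (Real.sqrt_lt' hh0).1 hh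
    have hS : 0 < Real.sqrt (y*(2*h^2 - y)) := Real.sqrt_pos.2 (by nlinarith)
    rw [abs_of_pos (by linarith : (0:ℝ) < 4*h), ← ENNReal.ofReal_mul (by positivity)]
    congr 1
    have he : -((2*h^2 - y)+y)/2 = -h^2 := by ring
    rw [he]
    field_simp
    ring
  rw [hB]
  -- Step C : pull out constants, reduce to Gamma integral
  have hC : ∫⁻ t in Ioi (0:ℝ), ENNReal.ofReal (Real.exp (-(t+y)/2) / (2*π*Real.sqrt (y*t)))
      = ENNReal.ofReal (Real.exp (-y/2) / (2*π*Real.sqrt y)) *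
        ∫⁻ t in Ioi (0:ℝ), ENNReal.ofReal (t ^ (-(1/2) : ℝ) * Real.exp (-(1/2) * t)) := by
    rw [← lintegral_const_mul' _ _ ENNReal.ofReal_ne_top]
    refine setLIntegral_congr_fun measurableSet_Ioi (fun t ht => ?_)
    have ht' : (0:ℝ) < t := ht
    rw [← ENNReal.ofReal_mul (by positivity)]
    congr 1
    have h1 : Real.sqrt (y*t) = Real.sqrt y * Real.sqrt t := Real.sqrt_mul hy.le t
    have h2 : t ^ (-(1/2) : ℝ) = (Real.sqrt t)⁻¹ := by
      rw [Real.rpow_neg ht'.le, ← Real.sqrt_eq_rpow]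
    have h3 : Real.exp (-(t+y)/2) = Real.exp (-y/2) * Real.exp (-(1/2)*t) := by
      rw [← Real.exp_add]; congr 1; ring
    have hst : 0 < Real.sqrt t := Real.sqrt_pos.2 ht'
    have hsy : 0 < Real.sqrt y := Real.sqrt_pos.2 hy
    rw [h1, h2, h3]
    field_simp
  rw [hC, gammaHalfLint, ← ENNReal.ofReal_mul (by positivity)]
  congr 1
  -- final real identity
  have h2 : Real.sqrt 2 * Real.sqrt π = Real.sqrt (2*π) := (Real.sqrt_mul (by norm_num) π).symm
  have h3 : Real.sqrt (2*π*y) = Real.sqrt (2*π) * Real.sqrt y := Real.sqrt_mul (by positivity) y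
  have h4 : Real.sqrt (2*π) * Real.sqrt (2*π) = 2*π := Real.mul_self_sqrt (by positivity)
  have hsy : 0 < Real.sqrt y := Real.sqrt_pos.2 hy
  have hs2pi : 0 < Real.sqrt (2*π) := Real.sqrt_pos.2 (by positivity)
  have e2 : Real.sqrt 2 * Real.sqrt 2 = 2 := Real.mul_self_sqrt (by norm_num)
  have epi : Real.sqrt π * Real.sqrt π = π := Real.mul_self_sqrt Real.pi_pos.le
  have h3' : Real.sqrt (2*π*y) = Real.sqrt 2 * Real.sqrt π * Real.sqrt y := by
    rw [h3, ← h2]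
  rw [h3', div_mul_eq_mul_div, div_eq_div_iff (by positivity) (by positivity)]
  linear_combination (Real.exp (-y/2) * Real.sqrt y * Real.sqrt π * Real.sqrt π) * e2
    + (2 * Real.exp (-y/2) * Real.sqrt y) * epi


lemma key (y : ℝ) :
    ∫⁻ h, ENNReal.ofReal ((Ici (0:ℝ)).indicator (fun γ => 2*γ*Real.exp (-γ^2)) h) *
      ENNReal.ofReal ((Ioo (0:ℝ) (2*h^2)).indicator
        (fun z => 1/(π*Real.sqrt (z*(2*h^2 - z)))) y)
    = ENNReal.ofReal ((Ioi (0:ℝ)).indicator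
        (fun y => Real.exp (-y/2) / Real.sqrt (2*π*y)) y) := by
  rcases le_or_gt y 0 with hy | hy
  · have h0 : ∀ h : ℝ, (Ioo (0:ℝ) (2*h^2)).indicator
        (fun z => 1/(π*Real.sqrt (z*(2*h^2 - z)))) y = 0 := fun h =>
      indicator_of_notMem (fun hmem => absurd hmem.1 (not_lt.2 hy)) _
    simp_rw [h0]
    rw [indicator_of_notMem (fun hmem => absurd (mem_Ioi.1 hmem) (not_lt.2 hy))]
    simp
  · rw [key_pos hy, indicator_of_mem (mem_Ioi.2 hy)]


lemma measG : Measurable fun p : ℝ × ℝ =>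
    ENNReal.ofReal ((Ioo (0:ℝ) (2*p.1^2)).indicator
      (fun z => 1/(π*Real.sqrt (z*(2*p.1^2 - z)))) p.2) := by
  have : (fun p : ℝ × ℝ =>
      ENNReal.ofReal ((Ioo (0:ℝ) (2*p.1^2)).indicator
        (fun z => 1/(π*Real.sqrt (z*(2*p.1^2 - z)))) p.2))
      = fun p : ℝ × ℝ => ENNReal.ofReal
        ({q : ℝ × ℝ | 0 < q.2 ∧ q.2 < 2*q.1^2}.indicator
          (fun q => 1/(π*Real.sqrt (q.2*(2*q.1^2 - q.2)))) p) := by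
    funext p
    simp only [Set.indicator_apply, mem_Ioo, Set.mem_setOf_eq]
  rw [this]
  refine ENNReal.measurable_ofReal.comp (Measurable.indicator ?_ ?_)
  · fun_prop
  · exact MeasurableSet.inter (measurableSet_lt measurable_const measurable_snd)
      (measurableSet_lt measurable_snd (by fun_prop))


lemma measF : Measurable fun γ : ℝ =>
    ENNReal.ofReal ((Ici (0:ℝ)).indicator (fun γ => 2*γ*Real.exp (-γ^2)) γ) :=
  ENNReal.measurable_ofReal.comp ((Measurable.indicator (by fun_prop) measurableSet_Ici))


lemma mainEq :
    ((volume.withDensity fun γ =>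
        ENNReal.ofReal ((Ici (0 : ℝ)).indicator (fun γ => 2 * γ * Real.exp (-γ ^ 2)) γ)).bind
      fun h => volume.withDensity fun y =>
        ENNReal.ofReal ((Ioo (0 : ℝ) (2 * h ^ 2)).indicator
          (fun y => 1 / (π * Real.sqrt (y * (2 * h ^ 2 - y)))) y))
    = (volume.withDensity fun y =>
        ENNReal.ofReal ((Ioi (0 : ℝ)).indicator
          (fun y => Real.exp (-y / 2) / Real.sqrt (2 * π * y)) y)) := by
  have hκ : Measurable fun h : ℝ => volume.withDensity fun y =>
      ENNReal.ofReal ((Ioo (0 : ℝ) (2 * h ^ 2)).indicator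
        (fun y => 1 / (π * Real.sqrt (y * (2 * h ^ 2 - y)))) y) := by
    refine Measure.measurable_of_measurable_coe _ (fun s hs => ?_)
    simp_rw [withDensity_apply _ hs]
    exact measG.lintegral_prod_right'
  ext s hs
  rw [Measure.bind_apply hs hκ.aemeasurable, withDensity_apply _ hs]
  simp_rw [withDensity_apply _ hs]
  rw [lintegral_withDensity_eq_lintegral_mul volume measF measG.lintegral_prod_right']
  simp only [Pi.mul_apply]
  have step : ∀ h : ℝ,
      (ENNReal.ofReal ((Ici (0 : ℝ)).indicator (fun γ => 2 * γ * Real.exp (-γ ^ 2)) h)) *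
        (∫⁻ y in s, ENNReal.ofReal ((Ioo (0 : ℝ) (2 * h ^ 2)).indicator
          (fun y => 1 / (π * Real.sqrt (y * (2 * h ^ 2 - y)))) y))
      = ∫⁻ y in s,
          ENNReal.ofReal ((Ici (0 : ℝ)).indicator (fun γ => 2 * γ * Real.exp (-γ ^ 2)) h) *
          ENNReal.ofReal ((Ioo (0 : ℝ) (2 * h ^ 2)).indicator
            (fun y => 1 / (π * Real.sqrt (y * (2 * h ^ 2 - y)))) y) := fun h =>
    (lintegral_const_mul' _ _ ENNReal.ofReal_ne_top).symm
  simp_rw [step]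
  rw [lintegral_lintegral_swap]
  · exact lintegral_congr fun y => key y
  · exact ((measF.comp measurable_fst).mul measG).aemeasurable


lemma gammaPDF_eq_chi (y : ℝ) :
    ProbabilityTheory.gammaPDF (1/2) (1/2) y
      = ENNReal.ofReal ((Ioi (0:ℝ)).indicator
          (fun y => Real.exp (-y/2) / Real.sqrt (2*π*y)) y) := by
  rcases lt_trichotomy y 0 with hy | hy | hy
  · rw [ProbabilityTheory.gammaPDF_of_neg hy,
      indicator_of_notMem (fun hmem => absurd (mem_Ioi.1 hmem) (not_lt.2 hy.le))]
    simp
  · subst hy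
    rw [ProbabilityTheory.gammaPDF_of_nonneg le_rfl,
      indicator_of_notMem (fun hmem => absurd (mem_Ioi.1 hmem) (lt_irrefl 0))]
    rw [Real.zero_rpow (by norm_num : (1/2 : ℝ) - 1 ≠ 0)]
    simp
  · rw [ProbabilityTheory.gammaPDF_of_nonneg hy.le, indicator_of_mem (mem_Ioi.2 hy)]
    congr 1
    rw [Real.Gamma_one_half_eq]
    have h1 : ((1:ℝ)/2) ^ ((1:ℝ)/2) = (Real.sqrt 2)⁻¹ := by
      rw [← Real.sqrt_eq_rpow, one_div, Real.sqrt_inv]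
    have h2 : y ^ ((1:ℝ)/2 - 1) = (Real.sqrt y)⁻¹ := by
      rw [show ((1:ℝ)/2 - 1) = -(1/2) by norm_num, Real.rpow_neg hy.le, ← Real.sqrt_eq_rpow]
    have h3 : Real.sqrt (2*π*y) = Real.sqrt 2 * Real.sqrt π * Real.sqrt y := by
      rw [Real.sqrt_mul (by positivity) y, Real.sqrt_mul (by norm_num) π]
    have h4 : -(1/2 * y) = -y/2 := by ring
    rw [h1, h2, h3, h4]
    have hs2 : (0:ℝ) < Real.sqrt 2 := Real.sqrt_pos.2 (by norm_num)
    have hspi : (0:ℝ) < Real.sqrt π := Real.sqrt_pos.2 Real.pi_pos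
    have hsy : (0:ℝ) < Real.sqrt y := Real.sqrt_pos.2 hy
    field_simp


lemma meanOne : (∫ y in Ioi (0 : ℝ), y * (Real.exp (-y / 2) / Real.sqrt (2 * π * y))) = 1 := by
  have hcong : ∀ y ∈ Ioi (0:ℝ), y * (Real.exp (-y / 2) / Real.sqrt (2 * π * y))
      = (Real.sqrt (2*π))⁻¹ * (y ^ ((1:ℝ)/2) * Real.exp (-(1/2) * y ^ (1:ℝ))) := by
    intro y hy
    have hy' : (0:ℝ) < y := hy
    have h3 : Real.sqrt (2*π*y) = Real.sqrt (2*π) * Real.sqrt y := by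
      rw [Real.sqrt_mul (by positivity) y]
    have h2 : y ^ ((1:ℝ)/2) = Real.sqrt y := (Real.sqrt_eq_rpow y).symm
    have h4 : -(1/2) * y ^ (1:ℝ) = -y/2 := by rw [Real.rpow_one]; ring
    have hsy : (0:ℝ) < Real.sqrt y := Real.sqrt_pos.2 hy'
    have hs2pi : (0:ℝ) < Real.sqrt (2*π) := Real.sqrt_pos.2 (by positivity)
    rw [h2, h3, h4]
    field_simp
    linear_combination (-1 : ℝ) * Real.sq_sqrt hy'.le
  rw [setIntegral_congr_fun measurableSet_Ioi hcong, MeasureTheory.integral_const_mul,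
    integral_rpow_mul_exp_neg_mul_rpow (by norm_num) (by norm_num) (by norm_num)]
  have hG : Real.Gamma ((1/2 + 1 : ℝ)/1) = Real.sqrt π / 2 := by
    rw [show ((1/2 + 1 : ℝ)/1) = 1/2 + 1 by norm_num,
      Real.Gamma_add_one (by norm_num), Real.Gamma_one_half_eq]
    ring
  have hpow : ((1:ℝ)/2) ^ (-(1/2 + 1 : ℝ)/1) = 2 * Real.sqrt 2 := by
    rw [show (-(1/2 + 1 : ℝ)/1) = -(3/2) by norm_num,
      Real.rpow_neg (by norm_num), show ((1:ℝ)/2) = 2⁻¹ by norm_num,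
      Real.inv_rpow (by norm_num), inv_inv,
      show ((3:ℝ)/2) = 1 + 1/2 by norm_num, Real.rpow_add (by norm_num), Real.rpow_one,
      ← Real.sqrt_eq_rpow]
  rw [hG, hpow]
  have h2 : Real.sqrt (2*π) = Real.sqrt 2 * Real.sqrt π := Real.sqrt_mul (by norm_num) π
  have hs2 : (0:ℝ) < Real.sqrt 2 := Real.sqrt_pos.2 (by norm_num)
  have hspi : (0:ℝ) < Real.sqrt π := Real.sqrt_pos.2 Real.pi_pos
  rw [h2]
  have e2 : Real.sqrt 2 * Real.sqrt 2 = 2 := Real.mul_self_sqrt (by norm_num)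
  have epi : Real.sqrt π * Real.sqrt π = π := Real.mul_self_sqrt Real.pi_pos.le
  field_simp

/-- If `H` is Rayleigh (density `2γe^{−γ²}`) and, conditional on `H`, `Y` has density
`1/(π√(y(2H²−y)))` on `(0, 2H²)`, then unconditionally `Y` has density `e^{−y/2}/√(2πy)`
on `(0,∞)`, i.e. `Y` is Gamma with shape `1/2` and rate `1/2`, with `E[Y] = 1`. -/
theorem mixture_arcsine_rayleigh :
    ((volume.withDensity fun γ =>
        ENNReal.ofReal ((Ici (0 : ℝ)).indicator (fun γ => 2 * γ * Real.exp (-γ ^ 2)) γ)).bind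
      fun h => volume.withDensity fun y =>
        ENNReal.ofReal ((Ioo (0 : ℝ) (2 * h ^ 2)).indicator
          (fun y => 1 / (π * Real.sqrt (y * (2 * h ^ 2 - y)))) y))
    = (volume.withDensity fun y =>
        ENNReal.ofReal ((Ioi (0 : ℝ)).indicator
          (fun y => Real.exp (-y / 2) / Real.sqrt (2 * π * y)) y)) ∧
    ((volume.withDensity fun γ =>
        ENNReal.ofReal ((Ici (0 : ℝ)).indicator (fun γ => 2 * γ * Real.exp (-γ ^ 2)) γ)).bind
      fun h => volume.withDensity fun y =>
        ENNReal.ofReal ((Ioo (0 : ℝ) (2 * h ^ 2)).indicator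
          (fun y => 1 / (π * Real.sqrt (y * (2 * h ^ 2 - y)))) y))
    = ProbabilityTheory.gammaMeasure (1 / 2) (1 / 2) ∧
    (∫ y in Ioi (0 : ℝ), y * (Real.exp (-y / 2) / Real.sqrt (2 * π * y))) = 1 := by
  refine ⟨mainEq, ?_, meanOne⟩
  rw [mainEq, ProbabilityTheory.gammaMeasure]
  congr 1
  funext y
  exact (gammaPDF_eq_chi y).symm
end

section
/- If H is Rayleigh with density 2γe^{−γ²} on [0,∞) and s > 0 is fixed, then ∫_{s/2}^{∞} (γe^{−γ²})/(π√(4γ² − s²)) dγ = e^{−s²/4}/(4√π). -/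
/-!
The substitution `u = √(γ² - s²/4)`, under which `γ dγ / √(4γ² - s²) = du / 2` and
`e^{-γ²} = e^{-s²/4} e^{-u²}`, turns the integral into `e^{-s²/4} / (2π) · ∫₀^∞ e^{-u²} du`,
and the half-line Gaussian integral is `√π / 2`.
-/

open Real Set MeasureTheory

lemma image_sqrt_sq_sub_sq_Ioi {a : ℝ} (ha : 0 ≤ a) :
    (fun γ : ℝ => √(γ ^ 2 - a ^ 2)) '' Ioi a = Ioi 0 := by
  ext u
  constructor
  · rintro ⟨γ, hγ, rfl⟩
    exact sqrt_pos.2 (by nlinarith [mem_Ioi.1 hγ])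
  · intro hu
    refine ⟨√(u ^ 2 + a ^ 2), ?_, ?_⟩
    · exact lt_sqrt_of_sq_lt (by nlinarith [mem_Ioi.1 hu])
    · dsimp only
      rw [sq_sqrt (by positivity), add_sub_cancel_right, sqrt_sq (le_of_lt hu)]

lemma strictMonoOn_sqrt_sq_sub_sq {a : ℝ} (ha : 0 ≤ a) :
    StrictMonoOn (fun γ : ℝ => √(γ ^ 2 - a ^ 2)) (Ioi a) := by
  intro x hx y _ hxy
  have hx : a < x := hx
  exact sqrt_lt_sqrt (by nlinarith) (by nlinarith)

lemma hasDerivAt_sqrt_sq_sub_sq {a γ : ℝ} (h : a ^ 2 < γ ^ 2) :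
    HasDerivAt (fun γ : ℝ => √(γ ^ 2 - a ^ 2)) (γ / √(γ ^ 2 - a ^ 2)) γ := by
  have := ((hasDerivAt_pow 2 γ).sub_const (a ^ 2)).sqrt (by linarith)
  convert this using 1
  field_simp
  ring

theorem integral_Ioi_div_sqrt_sq_sub_sq_smul {E : Type*} [NormedAddCommGroup E]
    [NormedSpace ℝ E] {a : ℝ} (ha : 0 ≤ a) (g : ℝ → E) :
    ∫ γ in Ioi a, (γ / √(γ ^ 2 - a ^ 2)) • g (γ ^ 2) = ∫ u in Ioi 0, g (u ^ 2 + a ^ 2) := by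
  have hderiv : ∀ γ ∈ Ioi a, HasDerivWithinAt (fun γ : ℝ => √(γ ^ 2 - a ^ 2))
      (γ / √(γ ^ 2 - a ^ 2)) (Ioi a) γ := fun γ hγ =>
    (hasDerivAt_sqrt_sq_sub_sq (by nlinarith [mem_Ioi.1 hγ])).hasDerivWithinAt
  rw [← image_sqrt_sq_sub_sq_Ioi ha, integral_image_eq_integral_abs_deriv_smul measurableSet_Ioi
    hderiv (strictMonoOn_sqrt_sq_sub_sq ha).injOn]
  refine setIntegral_congr_fun measurableSet_Ioi fun γ hγ => ?_
  have hγ : a < γ := hγ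
  rw [sq_sqrt (by nlinarith), sub_add_cancel,
    abs_of_nonneg (div_nonneg (by linarith) (sqrt_nonneg _))]

/-- The unconditioning integral for the density of the correlator output with `β = 1`:
for fixed `s > 0`, `∫_{s/2}^∞ γe^{−γ²}/(π√(4γ²−s²)) dγ = e^{−s²/4}/(4√π)`. -/
theorem unconditioning_integral (s : ℝ) (hs : 0 < s) :
    (∫ γ in Ioi (s / 2), γ * Real.exp (-γ ^ 2) / (π * Real.sqrt (4 * γ ^ 2 - s ^ 2)))
      = Real.exp (-s ^ 2 / 4) / (4 * Real.sqrt π) := by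
  have hsqrt : ∀ γ : ℝ, √(4 * γ ^ 2 - s ^ 2) = 2 * √(γ ^ 2 - (s / 2) ^ 2) := fun γ => by
    rw [show 4 * γ ^ 2 - s ^ 2 = 2 ^ 2 * (γ ^ 2 - (s / 2) ^ 2) by ring,
      sqrt_mul (by positivity), sqrt_sq zero_le_two]
  calc (∫ γ in Ioi (s / 2), γ * Real.exp (-γ ^ 2) / (π * Real.sqrt (4 * γ ^ 2 - s ^ 2)))
      = ∫ γ in Ioi (s / 2), (γ / √(γ ^ 2 - (s / 2) ^ 2)) • ((2 * π)⁻¹ * exp (-γ ^ 2)) := by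
        simp only [hsqrt, smul_eq_mul]
        congr 1 with γ
        ring
    _ = ∫ u in Ioi 0, (2 * π)⁻¹ * exp (-(u ^ 2 + (s / 2) ^ 2)) :=
        integral_Ioi_div_sqrt_sq_sub_sq_smul (a := s / 2) (half_pos hs).le
          fun x => (2 * π)⁻¹ * exp (-x)
    _ = (2 * π)⁻¹ * exp (-s ^ 2 / 4) * ∫ u in Ioi 0, exp (-1 * u ^ 2) := by
        rw [← integral_const_mul]
        congr 1 with u
        rw [mul_assoc, ← exp_add]
        ring_nf
    _ = Real.exp (-s ^ 2 / 4) / (4 * Real.sqrt π) := by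
        rw [integral_gaussian_Ioi, div_one]
        field_simp
        rw [sq_sqrt pi_pos.le]
        ring
end
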